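/- Commutator kernel estimate: with T a δ-Calderón–Zygmund operator, b ∈ BMO^d with exponent μ_b, and (a, Q) an atom with ∫ a = 0, ‖a‖_∞ ≤ |Q|^{−1/α}, for x ∉ 2√d·Q one has |[b,T](a)(x)| ≤ C · ( (𝔐 χ_Q(x))^{(d+δ−μ_b)/d} + ‖b‖_{BMO} (𝔐 χ_Q(x))^{(d+δ)/d} ) / ‖χ_Q‖_{L^α}. -/

import Mathlib

open MeasureTheory ENNReal

noncomputable section

/-- The axis-parallel cube in `ℝ^d` with center `xQ` and side-length `ℓ`. -/
def cube (d : ℕ) (xQ : Fin d → ℝ) (ℓ : ℝ) : Set (Fin d → ℝ) :=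
  {y | ‖y - xQ‖ ≤ ℓ / 2}

/-- The average of `b` over the cube `Q(xQ, ℓ)`. -/
def cubeAvg (d : ℕ) (b : (Fin d → ℝ) → ℝ) (xQ : Fin d → ℝ) (ℓ : ℝ) : ℝ :=
  ⨍ y in cube d xQ ℓ, b y

/-- The Hardy–Littlewood maximal function. -/
def HLMax (d : ℕ) (f : (Fin d → ℝ) → ℝ) (x : Fin d → ℝ) : ℝ≥0∞ :=
  ⨆ r > (0 : ℝ), (volume (Metric.ball x r))⁻¹ *
    ∫⁻ y in Metric.ball x r, ENNReal.ofReal |f y|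


/-!
For `y ∈ Q` the smoothness of `K` gives `|K(x,y) - K(x,x_Q)| ≲ A ℓ^δ / |x - x_Q|^(d+δ)`, and
`|b(x) - b(y)| ≤ |b(x) - b_Q| + |b(y) - b_Q|`, where the first term is `≲ (|x - x_Q| / ℓ)^μ` and
the second has mean at most `‖b‖_BMO` over `Q`. Integrating against `|a| ≤ |Q|^(-1/α)` bounds the
commutator by powers of `ℓ / |x - x_Q|`, which are controlled by `𝔐χ_Q(x)` because the ball of
radius `2|x - x_Q|` around `x` contains `Q`, whence `(ℓ / 4|x - x_Q|)^d ≤ 𝔐χ_Q(x)`.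
-/

lemma cube_eq_closedBall (d : ℕ) (xQ : Fin d → ℝ) (ℓ : ℝ) :
    cube d xQ ℓ = Metric.closedBall xQ (ℓ / 2) := by
  ext y; simp [cube, dist_eq_norm]

lemma measurableSet_cube (d : ℕ) (xQ : Fin d → ℝ) (ℓ : ℝ) :
    MeasurableSet (cube d xQ ℓ) := by
  rw [cube_eq_closedBall]; exact measurableSet_closedBall

lemma volume_cube (d : ℕ) (xQ : Fin d → ℝ) {ℓ : ℝ} (hℓ : 0 ≤ ℓ) :
    volume (cube d xQ ℓ) = ENNReal.ofReal (ℓ ^ (d : ℝ)) := by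
  rw [cube_eq_closedBall, Real.volume_pi_closedBall xQ (by linarith), Fintype.card_fin,
    Real.rpow_natCast, mul_div_cancel₀ ℓ two_ne_zero]

lemma le_norm_sub_of_notMem_cube {d : ℕ} (hd : 0 < d) {xQ x : Fin d → ℝ} {ℓ : ℝ} (hℓ : 0 ≤ ℓ)
    (hx : x ∉ cube d xQ (2 * Real.sqrt d * ℓ)) : ℓ ≤ ‖x - xQ‖ := by
  have h1 : 1 ≤ Real.sqrt d := Real.one_le_sqrt.mpr (by exact_mod_cast hd)
  simp only [cube, Set.mem_ofPred_eq, not_le] at hx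
  nlinarith

section Kernel

variable {E : Type*} [NormedAddCommGroup E]

/-- For a `δ`-Calderón–Zygmund kernel on `ℝ^d`, `n = d + δ`. -/
def HolderSmoothKernel (K : E → E → ℝ) (A δ n : ℝ) : Prop :=
  ∀ x y z, y ≠ x → 2 * ‖y - z‖ ≤ ‖x - y‖ → |K x y - K x z| ≤ A * ‖y - z‖ ^ δ / ‖x - y‖ ^ n

variable {K : E → E → ℝ} {A δ n : ℝ}

lemma abs_kernel_sub_le (hK : HolderSmoothKernel K A δ n)
    (hA : 0 ≤ A) (hδ : 0 ≤ δ) (hn : 0 ≤ n) {x y z : E} {s r : ℝ} (hr : 0 < r)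
    (hyz : ‖y - z‖ ≤ s) (hsr : 2 * s ≤ r) (hxy : r ≤ ‖x - y‖) :
    |K x y - K x z| ≤ A * s ^ δ / r ^ n := by
  have hyx : y ≠ x := fun h => by simp [h] at hxy; linarith
  have hs : 0 ≤ s := (norm_nonneg _).trans hyz
  refine (hK x y z hyx (by linarith)).trans ?_
  gcongr

/-- The smoothness condition need not apply to `y` and `c` directly (`‖x - y‖` may be as small as
`ℓ / 2`), but it applies to both halves of the path through their midpoint. -/
lemma abs_kernel_sub_center_le [NormedSpace ℝ E] (hK : HolderSmoothKernel K A δ n)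
    (hA : 0 ≤ A) (hδ : 0 ≤ δ) (hn : 0 ≤ n) {x y c : E} {ℓ : ℝ} (hℓ : 0 < ℓ)
    (hy : ‖y - c‖ ≤ ℓ / 2) (hℓx : ℓ ≤ ‖x - c‖) :
    |K x y - K x c| ≤ 2 * A * ℓ ^ δ / (‖x - c‖ / 2) ^ n := by
  set m := midpoint ℝ y c
  have hym : ‖y - m‖ ≤ ℓ / 4 := by
    rw [← dist_eq_norm, dist_left_midpoint, dist_eq_norm]; norm_num; linarith
  have hmc : ‖m - c‖ ≤ ℓ / 4 := by
    rw [← dist_eq_norm, dist_midpoint_right, dist_eq_norm]; norm_num; linarith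
  have hxy : ‖x - c‖ ≤ ‖x - y‖ + ‖y - c‖ := norm_sub_le_norm_sub_add_norm_sub x y c
  have hxm : ‖x - c‖ ≤ ‖x - m‖ + ‖m - c‖ := norm_sub_le_norm_sub_add_norm_sub x m c
  have h₁ := abs_kernel_sub_le hK hA hδ hn (x := x) (r := ‖x - c‖ / 2) (by linarith) hym
    (by linarith) (by linarith)
  have h₂ := abs_kernel_sub_le hK hA hδ hn (x := x) (r := ‖x - c‖ / 2) (by linarith) hmc
    (by linarith) (by linarith)
  calc |K x y - K x c| ≤ |K x y - K x m| + |K x m - K x c| := abs_sub_le _ _ _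
    _ ≤ A * ℓ ^ δ / (‖x - c‖ / 2) ^ n + A * ℓ ^ δ / (‖x - c‖ / 2) ^ n :=
      add_le_add (h₁.trans (by gcongr; linarith)) (h₂.trans (by gcongr; linarith))
    _ = 2 * A * ℓ ^ δ / (‖x - c‖ / 2) ^ n := by ring

end Kernel

section BMO

variable {d : ℕ} {b : (Fin d → ℝ) → ℝ} {xQ : Fin d → ℝ} {ℓ : ℝ}

/-- The estimate for `b` outside a cube, applied to a cube of the same size at distance `2ℓ`
from `Q`, bounds `b` on `Q`. -/
lemma exists_abs_le_on_cube (hd : 0 < d) {μ Cb : ℝ} (hμ : 0 ≤ μ)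
    (hBMOd : ∀ (xQ : Fin d → ℝ) (ℓ : ℝ) (x : Fin d → ℝ), 0 < ℓ → x ∉ cube d xQ ℓ →
      |b x - cubeAvg d b xQ ℓ| ≤ Cb * (ℓ⁻¹ * ‖x - xQ‖) ^ μ)
    (hℓ : 0 < ℓ) : ∃ B, ∀ y ∈ cube d xQ ℓ, |b y| ≤ B := by
  have : Nonempty (Fin d) := Fin.pos_iff_nonempty.mp hd
  obtain ⟨v, hv⟩ := exists_norm_eq (Fin d → ℝ) (c := 2 * ℓ) (by positivity)
  refine ⟨|cubeAvg d b (xQ + v) ℓ| + |Cb| * (5 / 2) ^ μ, fun y hy => ?_⟩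
  have hy : ‖y - xQ‖ ≤ ℓ / 2 := hy
  have hyz : y - (xQ + v) = (y - xQ) - v := by abel
  have hlow : ‖v‖ - ‖y - xQ‖ ≤ ‖y - (xQ + v)‖ :=
    (norm_sub_norm_le v (y - xQ)).trans_eq (by rw [hyz, norm_sub_rev])
  have hup : ‖y - (xQ + v)‖ ≤ ‖y - xQ‖ + ‖v‖ := by rw [hyz]; exact norm_sub_le _ _
  have hout : y ∉ cube d (xQ + v) ℓ := by
    simp only [cube, Set.mem_ofPred_eq, not_le]; linarith
  have hratio : ℓ⁻¹ * ‖y - (xQ + v)‖ ≤ 5 / 2 := by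
    rw [inv_mul_le_iff₀ hℓ]; linarith
  have hosc : |b y - cubeAvg d b (xQ + v) ℓ| ≤ |Cb| * (5 / 2) ^ μ :=
    (hBMOd (xQ + v) ℓ y hℓ hout).trans <| by
      gcongr
      · exact le_abs_self Cb
  linarith [abs_sub_abs_le_abs_sub (b y) (cubeAvg d b (xQ + v) ℓ)]

lemma integrableOn_cube_of_abs_le (hb : Measurable b) (hℓ : 0 ≤ ℓ) {B : ℝ}
    (hB : ∀ y ∈ cube d xQ ℓ, |b y| ≤ B) : IntegrableOn b (cube d xQ ℓ) :=
  Measure.integrableOn_of_bounded (by simp [volume_cube d xQ hℓ]) hb.aestronglyMeasurable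
    ((ae_restrict_iff' (measurableSet_cube d xQ ℓ)).mpr (Filter.Eventually.of_forall hB))

lemma setIntegral_abs_sub_cubeAvg_le (hℓ : 0 < ℓ) {M : ℝ}
    (hM : ⨍ y in cube d xQ ℓ, |b y - cubeAvg d b xQ ℓ| ≤ M) :
    ∫ y in cube d xQ ℓ, |b y - cubeAvg d b xQ ℓ| ≤ M * ℓ ^ (d : ℝ) := by
  rwa [setAverage_eq, measureReal_def, volume_cube d xQ hℓ.le,
    ENNReal.toReal_ofReal (by positivity), smul_eq_mul, inv_mul_le_iff₀ (by positivity),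
    mul_comm] at hM

end BMO

lemma abs_integral_le_setIntegral_of_abs_le {X : Type*} [MeasurableSpace X] {μ : Measure X}
    {s : Set X} (hs : MeasurableSet s) {f g : X → ℝ} (hf : Integrable f μ)
    (hf0 : ∀ y ∉ s, f y = 0) (hg : IntegrableOn g s μ) (hfg : ∀ y ∈ s, |f y| ≤ g y) :
    |∫ y, f y ∂μ| ≤ ∫ y in s, g y ∂μ := by
  rw [← setIntegral_eq_integral_of_forall_compl_eq_zero hf0]
  exact abs_integral_le_integral_abs.trans
    (setIntegral_mono_on hf.integrableOn.abs hg hs hfg)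

lemma ofReal_div_rpow_le_HLMax {d : ℕ} {xQ x : Fin d → ℝ} {ℓ : ℝ} (hℓ : 0 < ℓ)
    (hℓx : ℓ ≤ ‖x - xQ‖) :
    ENNReal.ofReal ((ℓ / (4 * ‖x - xQ‖)) ^ (d : ℝ)) ≤ HLMax d ((cube d xQ ℓ).indicator 1) x := by
  set R := ‖x - xQ‖
  have hR : 0 < R := hℓ.trans_le hℓx
  have hsub : cube d xQ ℓ ⊆ Metric.ball x (2 * R) := fun y (hy : ‖y - xQ‖ ≤ ℓ / 2) => by
    rw [Metric.mem_ball, dist_eq_norm]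
    linarith [norm_sub_le_norm_sub_add_norm_sub y xQ x, norm_sub_rev xQ x]
  have hball : volume (Metric.ball x (2 * R)) = ENNReal.ofReal ((4 * R) ^ (d : ℝ)) := by
    rw [Real.volume_pi_ball x (by positivity), Fintype.card_fin, Real.rpow_natCast]
    ring_nf
  have hlint : ∫⁻ y in Metric.ball x (2 * R), ENNReal.ofReal |(cube d xQ ℓ).indicator 1 y|
      = volume (cube d xQ ℓ) := by
    have hind : (fun y => ENNReal.ofReal |(cube d xQ ℓ).indicator (1 : (Fin d → ℝ) → ℝ) y|)
        = (cube d xQ ℓ).indicator 1 := by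
      ext y; by_cases hy : y ∈ cube d xQ ℓ <;> simp [hy]
    rw [hind, lintegral_indicator_one (measurableSet_cube d xQ ℓ),
      Measure.restrict_apply (measurableSet_cube d xQ ℓ), Set.inter_eq_left.mpr hsub]
  calc ENNReal.ofReal ((ℓ / (4 * R)) ^ (d : ℝ))
      = (volume (Metric.ball x (2 * R)))⁻¹ *
        ∫⁻ y in Metric.ball x (2 * R), ENNReal.ofReal |(cube d xQ ℓ).indicator 1 y| := by
        rw [hlint, hball, volume_cube d xQ hℓ.le, Real.div_rpow hℓ.le (by positivity),
          ENNReal.ofReal_div_of_pos (by positivity), div_eq_mul_inv, mul_comm]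
    _ ≤ HLMax d ((cube d xQ ℓ).indicator 1) x :=
      le_iSup₂ (f := fun r (_ : r > (0 : ℝ)) => (volume (Metric.ball x r))⁻¹ *
        ∫⁻ y in Metric.ball x r, ENNReal.ofReal |(cube d xQ ℓ).indicator 1 y|) (2 * R)
        (by positivity)

lemma ofReal_div_rpow_le_rpow_HLMax {d : ℕ} (hd : 0 < d) {xQ x : Fin d → ℝ} {ℓ : ℝ} (hℓ : 0 < ℓ)
    (hℓx : ℓ ≤ ‖x - xQ‖) {e : ℝ} (he : 0 ≤ e) :
    ENNReal.ofReal ((ℓ / ‖x - xQ‖) ^ e) ≤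
      ENNReal.ofReal (4 ^ e) * HLMax d ((cube d xQ ℓ).indicator 1) x ^ (e / d) := by
  have hR : 0 < ‖x - xQ‖ := hℓ.trans_le hℓx
  have ht : 0 ≤ ℓ / (4 * ‖x - xQ‖) := by positivity
  have hsplit : (ℓ / ‖x - xQ‖) ^ e = 4 ^ e * ((ℓ / (4 * ‖x - xQ‖)) ^ (d : ℝ)) ^ (e / d) := by
    rw [← Real.rpow_mul ht, mul_div_cancel₀ e (by positivity), ← Real.mul_rpow (by norm_num) ht]
    field_simp
  rw [hsplit, ENNReal.ofReal_mul (by positivity),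
    ← ENNReal.ofReal_rpow_of_nonneg (by positivity : 0 ≤ (ℓ / (4 * ‖x - xQ‖)) ^ (d : ℝ))
      (by positivity)]
  gcongr
  exact ofReal_div_rpow_le_HLMax hℓ hℓx

lemma inv_mul_kernel_bound_eq {A ℓ R s δ μ p Cb M : ℝ} (hA : A ≠ 0) (hℓ : 0 < ℓ) (hR : 0 < R) :
    A⁻¹ * (2 * A * ℓ ^ δ / (R / 2) ^ (s + δ) * p * ((Cb * (ℓ⁻¹ * R) ^ μ + M) * ℓ ^ s)) =
      2 ^ (s + δ + 1) * p * (Cb * (ℓ / R) ^ (s + δ - μ) + M * (ℓ / R) ^ (s + δ)) := by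
  rw [Real.rpow_sub (by positivity), Real.rpow_add_one two_ne_zero, Real.div_rpow hℓ.le hR.le,
    Real.div_rpow hℓ.le hR.le, Real.div_rpow hR.le zero_le_two, Real.rpow_add hℓ,
    Real.mul_rpow (by positivity) hR.le, Real.inv_rpow hℓ.le]
  field_simp

lemma abs_commutator_integral_le {d : ℕ} {n δ A ℓ p c M : ℝ} {K : (Fin d → ℝ) → (Fin d → ℝ) → ℝ}
    {b a : (Fin d → ℝ) → ℝ} {xQ x : Fin d → ℝ}
    (hK : HolderSmoothKernel K A δ n) (hA : 0 ≤ A) (hδ : 0 ≤ δ) (hn : 0 ≤ n)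
    (hℓ : 0 < ℓ) (hℓx : ℓ ≤ ‖x - xQ‖) (ha_supp : ∀ y, y ∉ cube d xQ ℓ → a y = 0) (ha : ∀ y, |a y| ≤ p)
    (hb : IntegrableOn b (cube d xQ ℓ)) (hbx : |b x - cubeAvg d b xQ ℓ| ≤ c)
    (hM : ⨍ y in cube d xQ ℓ, |b y - cubeAvg d b xQ ℓ| ≤ M)
    (hint : Integrable (fun y => (K x y - K x xQ) * (b x - b y) * a y)) :
    |∫ y, (K x y - K x xQ) * (b x - b y) * a y| ≤
      2 * A * ℓ ^ δ / (‖x - xQ‖ / 2) ^ n * p * ((c + M) * ℓ ^ (d : ℝ)) := by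
  set Q := cube d xQ ℓ
  set bQ := cubeAvg d b xQ ℓ
  set κ := 2 * A * ℓ ^ δ / (‖x - xQ‖ / 2) ^ n
  have hp : 0 ≤ p := (abs_nonneg _).trans (ha xQ)
  have hκ : 0 ≤ κ := by have := hℓ.trans_le hℓx; positivity
  have hc : 0 ≤ c := (abs_nonneg _).trans hbx
  have hQ : volume Q ≠ ⊤ := by simp [Q, volume_cube d xQ hℓ.le]
  have hconst : IntegrableOn (fun _ => c) Q := integrableOn_const hQ
  have hosc : IntegrableOn (fun y => |b y - bQ|) Q := (hb.sub (integrableOn_const hQ)).abs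
  have hpoint : ∀ y ∈ Q, |(K x y - K x xQ) * (b x - b y) * a y| ≤ κ * p * (c + |b y - bQ|) := by
    intro y hy
    have hb_diff : |b x - b y| ≤ c + |b y - bQ| := by
      linarith [abs_sub_le (b x) bQ (b y), abs_sub_comm bQ (b y)]
    rw [abs_mul, abs_mul]
    calc |K x y - K x xQ| * |b x - b y| * |a y| ≤ κ * (c + |b y - bQ|) * p :=
          mul_le_mul (mul_le_mul (abs_kernel_sub_center_le hK hA hδ hn hℓ hy hℓx) hb_diff
            (abs_nonneg _) hκ) (ha y) (abs_nonneg _) (by positivity)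
      _ = κ * p * (c + |b y - bQ|) := by ring
  calc |∫ y, (K x y - K x xQ) * (b x - b y) * a y|
      ≤ ∫ y in Q, κ * p * (c + |b y - bQ|) :=
        abs_integral_le_setIntegral_of_abs_le (measurableSet_cube d xQ ℓ) hint
          (fun y hy => by simp [ha_supp y hy])
          ((hconst.add hosc).const_mul _) hpoint
    _ = κ * p * (c * ℓ ^ (d : ℝ) + ∫ y in Q, |b y - bQ|) := by
        rw [integral_const_mul, integral_add hconst hosc, setIntegral_const, measureReal_def,
          volume_cube d xQ hℓ.le, ENNReal.toReal_ofReal (by positivity), smul_eq_mul, mul_comm c]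
    _ ≤ κ * p * ((c + M) * ℓ ^ (d : ℝ)) := by
        have := setIntegral_abs_sub_cubeAvg_le hℓ hM
        gcongr
        linarith

lemma ofReal_add_rpow_le_HLMax {d : ℕ} (hd : 0 < d) {xQ x : Fin d → ℝ} {ℓ Cb M μ n : ℝ}
    (hℓ : 0 < ℓ) (hℓx : ℓ ≤ ‖x - xQ‖) (hCb : 0 ≤ Cb) (hM : 0 ≤ M) (hμ : 0 ≤ μ) (hμn : μ ≤ n) :
    ENNReal.ofReal (Cb * (ℓ / ‖x - xQ‖) ^ (n - μ) + M * (ℓ / ‖x - xQ‖) ^ n) ≤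
      ENNReal.ofReal (4 ^ n * max Cb 1) *
        (HLMax d ((cube d xQ ℓ).indicator 1) x ^ ((n - μ) / d) +
          ENNReal.ofReal M * HLMax d ((cube d xQ ℓ).indicator 1) x ^ (n / d)) := by
  set m := HLMax d ((cube d xQ ℓ).indicator 1) x
  have h₁ := ofReal_div_rpow_le_rpow_HLMax hd hℓ hℓx (sub_nonneg.mpr hμn)
  have h₂ := ofReal_div_rpow_le_rpow_HLMax hd hℓ hℓx (hμ.trans hμn)
  have hc₁ : ENNReal.ofReal Cb * ENNReal.ofReal (4 ^ (n - μ)) ≤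
      ENNReal.ofReal (4 ^ n * max Cb 1) := by
    rw [← ENNReal.ofReal_mul hCb, mul_comm]
    gcongr
    · norm_num
    · linarith
    · exact le_max_left _ _
  have hc₂ : ENNReal.ofReal (4 ^ n) ≤ ENNReal.ofReal (4 ^ n * max Cb 1) := by
    gcongr
    exact le_mul_of_one_le_right (by positivity) (le_max_right _ _)
  calc ENNReal.ofReal (Cb * (ℓ / ‖x - xQ‖) ^ (n - μ) + M * (ℓ / ‖x - xQ‖) ^ n)
      = ENNReal.ofReal Cb * ENNReal.ofReal ((ℓ / ‖x - xQ‖) ^ (n - μ)) +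
          ENNReal.ofReal M * ENNReal.ofReal ((ℓ / ‖x - xQ‖) ^ n) := by
        have := hℓ.trans_le hℓx
        rw [ENNReal.ofReal_add (by positivity) (by positivity), ENNReal.ofReal_mul hCb,
          ENNReal.ofReal_mul hM]
    _ ≤ ENNReal.ofReal Cb * (ENNReal.ofReal (4 ^ (n - μ)) * m ^ ((n - μ) / d)) +
          ENNReal.ofReal M * (ENNReal.ofReal (4 ^ n) * m ^ (n / d)) := by gcongr
    _ ≤ ENNReal.ofReal (4 ^ n * max Cb 1) * m ^ ((n - μ) / d) +
          ENNReal.ofReal M * (ENNReal.ofReal (4 ^ n * max Cb 1) * m ^ (n / d)) := by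
        rw [← mul_assoc (ENNReal.ofReal Cb)]
        gcongr
    _ = ENNReal.ofReal (4 ^ n * max Cb 1) *
          (m ^ ((n - μ) / d) + ENNReal.ofReal M * m ^ (n / d)) := by
        ring

theorem stmt16_general (d : ℕ) (hd : 0 < d) (δ α : ℝ) (hδ : 0 < δ)
    (b : (Fin d → ℝ) → ℝ) (hbmeas : Measurable b)
    (μ : ℝ) (hμ0 : 0 < μ) (hμd : μ < d) (Cb : ℝ) (hCb : 0 < Cb)
    (hBMOd : ∀ (xQ : Fin d → ℝ) (ℓ : ℝ) (x : Fin d → ℝ), 0 < ℓ → x ∉ cube d xQ ℓ →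
      |b x - cubeAvg d b xQ ℓ| ≤ Cb * (ℓ⁻¹ * ‖x - xQ‖) ^ μ)
    (M : ℝ) (hM : 0 ≤ M)
    (hBMO : ∀ (xQ : Fin d → ℝ) (ℓ : ℝ), 0 < ℓ →
      ⨍ y in cube d xQ ℓ, |b y - cubeAvg d b xQ ℓ| ≤ M) :
    ∃ C : ℝ≥0∞, 0 < C ∧ C < ⊤ ∧
      ∀ (K : (Fin d → ℝ) → (Fin d → ℝ) → ℝ) (A : ℝ), 0 < A →
        (∀ x y z, y ≠ x → 2 * ‖y - z‖ ≤ ‖x - y‖ →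
          |K x y - K x z| ≤ A * ‖y - z‖ ^ δ / ‖x - y‖ ^ ((d : ℝ) + δ)) →
        ∀ (a : (Fin d → ℝ) → ℝ) (xQ : Fin d → ℝ) (ℓ : ℝ), 0 < ℓ →
          Measurable a → (∀ y, y ∉ cube d xQ ℓ → a y = 0) →
          (∀ y, |a y| ≤ (ℓ ^ (d : ℝ)) ^ (-(1 / α))) →
          (∫ y, a y) = 0 →
          ∀ x, x ∉ cube d xQ (2 * Real.sqrt d * ℓ) →
            Integrable (fun y => (K x y - K x xQ) * (b x - b y) * a y) →
            ENNReal.ofReal (A⁻¹ * |∫ y, (K x y - K x xQ) * (b x - b y) * a y|)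
              ≤ C * ((HLMax d ((cube d xQ ℓ).indicator 1) x)
                      ^ (((d : ℝ) + δ - μ) / d)
                    + ENNReal.ofReal M *
                      (HLMax d ((cube d xQ ℓ).indicator 1) x) ^ (((d : ℝ) + δ) / d))
                / ENNReal.ofReal ((ℓ ^ (d : ℝ)) ^ (1 / α)) := by
  refine ⟨ENNReal.ofReal (2 ^ ((d : ℝ) + δ + 1)) * ENNReal.ofReal (4 ^ ((d : ℝ) + δ) * max Cb 1),
    by positivity, by finiteness, ?_⟩
  intro K A hA hK a xQ ℓ hℓ _ ha_supp ha _ x hx hint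
  have hℓx : ℓ ≤ ‖x - xQ‖ := le_norm_sub_of_notMem_cube hd hℓ.le hx
  have hxQ : x ∉ cube d xQ ℓ := fun h => by simp only [cube, Set.mem_ofPred_eq] at h; linarith
  obtain ⟨B, hB⟩ := exists_abs_le_on_cube (xQ := xQ) hd hμ0.le hBMOd hℓ
  have hI := abs_commutator_integral_le hK hA.le hδ.le (by positivity) hℓ hℓx ha_supp ha
    (integrableOn_cube_of_abs_le hbmeas hℓ.le hB) (hBMOd xQ ℓ x hℓ hxQ) (hBMO xQ ℓ hℓ) hint
  have hreal := mul_le_mul_of_nonneg_left hI (inv_nonneg.mpr hA.le)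
  rw [inv_mul_kernel_bound_eq hA.ne' hℓ (hℓ.trans_le hℓx)] at hreal
  have hP : 0 < ℓ ^ (d : ℝ) := by positivity
  calc ENNReal.ofReal (A⁻¹ * |∫ y, (K x y - K x xQ) * (b x - b y) * a y|)
      ≤ ENNReal.ofReal (2 ^ ((d : ℝ) + δ + 1)) *
          ENNReal.ofReal (Cb * (ℓ / ‖x - xQ‖) ^ ((d : ℝ) + δ - μ) +
            M * (ℓ / ‖x - xQ‖) ^ ((d : ℝ) + δ)) /
          ENNReal.ofReal ((ℓ ^ (d : ℝ)) ^ (1 / α)) := by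
        refine (ENNReal.ofReal_le_ofReal hreal).trans_eq ?_
        rw [mul_comm _ (_ ^ (-(1 / α))), mul_assoc, ENNReal.ofReal_mul (by positivity),
          Real.rpow_neg hP.le, ENNReal.ofReal_inv_of_pos (by positivity),
          ENNReal.ofReal_mul (by positivity), ENNReal.div_eq_inv_mul]
    _ ≤ _ := by
        rw [mul_assoc]
        gcongr
        exact ofReal_add_rpow_le_HLMax hd hℓ hℓx hCb.le hM hμ0.le (by linarith)

/-- Commutator kernel estimate: with `T` a `δ`-Calderón–Zygmund operator with kernel
`K`, `b ∈ BMO^d` with exponent `μ_b` and BMO bound `M`, and `(a, Q)` an atom with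
`∫ a = 0`, `‖a‖_∞ ≤ |Q|^{−1/α}`, for `x ∉ 2√d Q` (where
`[b,T](a)(x) = ∫ (K(x,y) − K(x,x_Q))(b(x) − b(y)) a(y) dy`):
`|[b,T](a)(x)| ≤ C ((𝔐χ_Q(x))^{(d+δ−μ_b)/d} + M (𝔐χ_Q(x))^{(d+δ)/d}) / ‖χ_Q‖_{L^α}`. -/
theorem stmt16 (d : ℕ) (hd : 0 < d) (δ α : ℝ) (hδ : 0 < δ) (hα : 0 < α)
    (b : (Fin d → ℝ) → ℝ) (hbmeas : Measurable b)
    (μ : ℝ) (hμ0 : 0 < μ) (hμd : μ < d) (Cb : ℝ) (hCb : 0 < Cb)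
    (hBMOd : ∀ (xQ : Fin d → ℝ) (ℓ : ℝ) (x : Fin d → ℝ), 0 < ℓ → x ∉ cube d xQ ℓ →
      |b x - cubeAvg d b xQ ℓ| ≤ Cb * (ℓ⁻¹ * ‖x - xQ‖) ^ μ)
    (M : ℝ) (hM : 0 ≤ M)
    (hBMO : ∀ (xQ : Fin d → ℝ) (ℓ : ℝ), 0 < ℓ →
      ⨍ y in cube d xQ ℓ, |b y - cubeAvg d b xQ ℓ| ≤ M) :
    ∃ C : ℝ≥0∞, 0 < C ∧ C < ⊤ ∧
      ∀ (K : (Fin d → ℝ) → (Fin d → ℝ) → ℝ) (A : ℝ), 0 < A →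
        (∀ x y z, y ≠ x → 2 * ‖y - z‖ ≤ ‖x - y‖ →
          |K x y - K x z| ≤ A * ‖y - z‖ ^ δ / ‖x - y‖ ^ ((d : ℝ) + δ)) →
        ∀ (a : (Fin d → ℝ) → ℝ) (xQ : Fin d → ℝ) (ℓ : ℝ), 0 < ℓ →
          Measurable a → (∀ y, y ∉ cube d xQ ℓ → a y = 0) →
          (∀ y, |a y| ≤ (ℓ ^ (d : ℝ)) ^ (-(1 / α))) →
          (∫ y, a y) = 0 →
          ∀ x, x ∉ cube d xQ (2 * Real.sqrt d * ℓ) →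
            Integrable (fun y => (K x y - K x xQ) * (b x - b y) * a y) →
            ENNReal.ofReal (A⁻¹ * |∫ y, (K x y - K x xQ) * (b x - b y) * a y|)
              ≤ C * ((HLMax d ((cube d xQ ℓ).indicator 1) x)
                      ^ (((d : ℝ) + δ - μ) / d)
                    + ENNReal.ofReal M *
                      (HLMax d ((cube d xQ ℓ).indicator 1) x) ^ (((d : ℝ) + δ) / d))
                / ENNReal.ofReal ((ℓ ^ (d : ℝ)) ^ (1 / α)) :=
  stmt16_general d hd δ α hδ b hbmeas μ hμ0 hμd Cb hCb hBMOd M hM hBMO
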